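/- Let ω be admissible and k ∈ ℕ. If the number of indices i ∈ {0,…,k−1} for which g_{σ^i ω}(0) ≤ G/2^{k−i} is at most l, then for every connected component D^k_j of (f^k_ω)^{-1}(D), the degree of the proper map f^k_ω : D^k_j → D is at most 2^l. -/

import Mathlib

open Filter MeasureTheory Topology Set Complex Bornology Pointwise

/-- Non-autonomous iteration of quadratic maps: `fiter c (n+1) z = (fiter c n z)^2 + c n`. -/
noncomputable def fiter (c : ℕ → ℂ) : ℕ → ℂ → ℂ
  | 0, z => z
  | n + 1, z => (fiter c n z) ^ 2 + c n

/-- The Green's function, defined via limsup of `2^{-n} log |f^n_ω(z)|`. -/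
noncomputable def green (c : ℕ → ℂ) (z : ℂ) : ℝ :=
  Filter.limsup (fun n => (1 / 2 ^ n : ℝ) * Real.log ‖fiter c n z‖) Filter.atTop


lemma fiter_add (c : ℕ → ℂ) (m : ℕ) : ∀ n z,
    fiter c (m + n) z = fiter (fun i => c (i + m)) n (fiter c m z) := by
  intro n
  induction n with
  | zero => intro z; rfl
  | succ n ih =>
    intro z
    show (fiter c (m + n) z) ^ 2 + c (m + n)
        = (fiter (fun i => c (i + m)) n (fiter c m z)) ^ 2 + c (n + m)
    rw [ih, add_comm m n]

lemma fiter_succ_left (c : ℕ → ℂ) (m : ℕ) (z : ℂ) :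
    fiter c (m + 1) z = fiter (fun i => c (i + 1)) m (z ^ 2 + c 0) := by
  have := fiter_add c 1 m z
  rw [add_comm 1 m] at this
  exact this

lemma fiter_even (c : ℕ → ℂ) (m : ℕ) (z : ℂ) :
    fiter c (m + 1) (-z) = fiter c (m + 1) z := by
  rw [fiter_succ_left, fiter_succ_left, neg_pow]
  norm_num

noncomputable def fpoly (c : ℕ → ℂ) : ℕ → Polynomial ℂ
  | 0 => Polynomial.X
  | n + 1 => (fpoly c n) ^ 2 + Polynomial.C (c n)

lemma fpoly_eval (c : ℕ → ℂ) : ∀ n z, (fpoly c n).eval z = fiter c n z := by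
  intro n
  induction n with
  | zero => intro z; simp [fpoly, fiter]
  | succ n ih => intro z; simp [fpoly, fiter, ih]

lemma fpoly_monic (c : ℕ → ℂ) : ∀ n, (fpoly c n).Monic ∧ (fpoly c n).natDegree = 2 ^ n := by
  intro n
  induction n with
  | zero => exact ⟨Polynomial.monic_X, Polynomial.natDegree_X⟩
  | succ n ih =>
    obtain ⟨hm, hd⟩ := ih
    have hm2 : ((fpoly c n) ^ 2).Monic := hm.pow 2
    have hd2 : ((fpoly c n) ^ 2).natDegree = 2 ^ (n + 1) := by
      rw [Polynomial.natDegree_pow, hd]; ring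
    have hdeg' : (Polynomial.C (c n)).degree < ((fpoly c n) ^ 2).degree := by
      calc (Polynomial.C (c n)).degree ≤ 0 := Polynomial.degree_C_le
        _ < ((fpoly c n)^2).degree := by
            rw [Polynomial.degree_eq_natDegree hm2.ne_zero, hd2]
            exact_mod_cast WithBot.coe_lt_coe.mpr (by positivity)
    constructor
    · exact hm2.add_of_left hdeg'
    · show ((fpoly c n)^2 + Polynomial.C (c n)).natDegree = 2 ^ (n+1)
      rw [Polynomial.natDegree_eq_of_degree_eq
        (Polynomial.degree_add_eq_left_of_degree_lt hdeg'), hd2]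

lemma fpoly_degree_pos (c : ℕ → ℂ) (n : ℕ) : 0 < (fpoly c n).degree := by
  have h := fpoly_monic c n
  rw [Polynomial.degree_eq_natDegree h.1.ne_zero, h.2]
  exact_mod_cast WithBot.coe_lt_coe.mpr (by positivity)

lemma fpoly_sub_ne_zero (c : ℕ → ℂ) (n : ℕ) (w : ℂ) : fpoly c n - Polynomial.C w ≠ 0 := by
  intro h
  have h1 : fpoly c n = Polynomial.C w := by
    have := sub_eq_zero.mp h; exact this
  have h2 := fpoly_degree_pos c n
  rw [h1] at h2
  exact absurd (lt_of_lt_of_le h2 Polynomial.degree_C_le) (by simp)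

lemma fiber_finite (c : ℕ → ℂ) (n : ℕ) (w : ℂ) : {y : ℂ | fiter c n y = w}.Finite := by
  have : {y : ℂ | fiter c n y = w} = {y : ℂ | (fpoly c n - Polynomial.C w).IsRoot y} := by
    ext y
    simp [Polynomial.IsRoot, Polynomial.eval_sub, fpoly_eval, sub_eq_zero]
  rw [this]
  exact Polynomial.finite_setOf_isRoot (fpoly_sub_ne_zero c n w)

lemma green_shift (c : ℕ → ℂ) (m : ℕ) (z : ℂ) :
    green c z = (1 / 2 ^ m : ℝ) * green (fun i => c (i + m)) (fiter c m z) := by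
  set L : ℕ → ℝ := fun n => (1 / 2 ^ n : ℝ) * Real.log ‖fiter c n z‖ with hL
  set B : ℕ → ℝ := fun n =>
    (1 / 2 ^ n : ℝ) * Real.log ‖fiter (fun i => c (i + m)) n (fiter c m z)‖ with hB
  have key : ∀ n, L (m + n) = (1 / 2 ^ m : ℝ) * B n := by
    intro n
    simp only [hL, hB, fiter_add c m n z]
    rw [pow_add]
    ring
  have hset : {a : ℝ | ∀ᶠ n in atTop, L n ≤ a}
      = (1 / 2 ^ m : ℝ) • {a : ℝ | ∀ᶠ n in atTop, B n ≤ a} := by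
    ext a
    simp only [Set.mem_setOf_eq, eventually_atTop]
    constructor
    · rintro ⟨N, hN⟩
      refine Set.mem_smul_set.mpr ⟨(2 ^ m : ℝ) * a, ⟨N, fun n hn => ?_⟩, by
        rw [smul_eq_mul, ← mul_assoc, one_div, inv_mul_cancel₀ (by positivity), one_mul]⟩
      have := hN (m + n) (le_trans hn (Nat.le_add_left n m))
      rw [key n] at this
      have h2 : (0:ℝ) < 2 ^ m := by positivity
      calc B n = (2^m : ℝ) * ((1 / 2 ^ m : ℝ) * B n) := by field_simp
        _ ≤ (2^m : ℝ) * a := by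
            exact mul_le_mul_of_nonneg_left this (le_of_lt h2)
    · rintro ⟨x, ⟨N, hN⟩, rfl⟩
      refine ⟨N + m, fun n hn => ?_⟩
      obtain ⟨j, rfl⟩ : ∃ j, n = m + j := ⟨n - m, by omega⟩
      rw [key j]
      have hj : N ≤ j := by omega
      have := hN j hj
      simp only [smul_eq_mul]
      have h2 : (0:ℝ) ≤ 1 / 2 ^ m := by positivity
      exact mul_le_mul_of_nonneg_left this h2
  rw [green, green, Filter.limsup_eq, Filter.limsup_eq]
  show sInf {a : ℝ | ∀ᶠ n in atTop, L n ≤ a} = (1 / 2 ^ m : ℝ) * sInf {a : ℝ | ∀ᶠ n in atTop, B n ≤ a}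
  rw [hset, Real.sInf_smul_of_nonneg (by positivity)]
  rfl

-- locally constant on preconnected implies constant
lemma const_of_locconst {X : Type*} [MetricSpace X] {S : Set X} (hS : IsPreconnected S)
    {f : X → ℂ} (hloc : ∀ x ∈ S, ∃ ε > 0, ∀ y ∈ S, dist y x < ε → f y = f x)
    {a b : X} (ha : a ∈ S) (hb : b ∈ S) : f a = f b := by
  have hloc' : ∀ x : X, ∃ ε > 0, ∀ y ∈ S, x ∈ S → dist y x < ε → f y = f x := by
    intro x
    by_cases hx : x ∈ S
    · obtain ⟨ε, hε, h⟩ := hloc x hx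
      exact ⟨ε, hε, fun y hy _ hd => h y hy hd⟩
    · exact ⟨1, one_pos, fun y _ hx' _ => absurd hx' hx⟩
  choose ε hε hrad using hloc'
  by_contra hne
  set u : Set X := ⋃ (x : X) (_ : x ∈ S ∧ f x = f a), Metric.ball x (ε x) with hu
  set v : Set X := ⋃ (x : X) (_ : x ∈ S ∧ f x ≠ f a), Metric.ball x (ε x) with hv
  have hou : IsOpen u := isOpen_iUnion fun x => isOpen_iUnion fun _ => Metric.isOpen_ball
  have hov : IsOpen v := isOpen_iUnion fun x => isOpen_iUnion fun _ => Metric.isOpen_ball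
  have hcov : S ⊆ u ∪ v := by
    intro x hx
    by_cases hfx : f x = f a
    · exact Or.inl (Set.mem_iUnion₂.mpr ⟨x, ⟨hx, hfx⟩, Metric.mem_ball_self (hε x)⟩)
    · exact Or.inr (Set.mem_iUnion₂.mpr ⟨x, ⟨hx, hfx⟩, Metric.mem_ball_self (hε x)⟩)
  have hSu : (S ∩ u).Nonempty :=
    ⟨a, ha, Set.mem_iUnion₂.mpr ⟨a, ⟨ha, rfl⟩, Metric.mem_ball_self (hε a)⟩⟩
  have hSv : (S ∩ v).Nonempty :=
    ⟨b, hb, Set.mem_iUnion₂.mpr ⟨b, ⟨hb, fun h => hne h.symm⟩, Metric.mem_ball_self (hε b)⟩⟩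
  obtain ⟨y, hyS, hyu, hyv⟩ := hS u v hou hov hcov hSu hSv
  obtain ⟨x₁, ⟨hx₁S, hfx₁⟩, hy₁⟩ := Set.mem_iUnion₂.mp hyu
  obtain ⟨x₂, ⟨hx₂S, hfx₂⟩, hy₂⟩ := Set.mem_iUnion₂.mp hyv
  have e1 : f y = f x₁ := hrad x₁ y hyS hx₁S (Metric.mem_ball.mp hy₁)
  have e2 : f y = f x₂ := hrad x₂ y hyS hx₂S (Metric.mem_ball.mp hy₂)
  exact hfx₂ (by rw [← e2, e1, hfx₁])

-- continuous integer-valued functions are constant on preconnected sets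
lemma const_of_intvalued {X : Type*} [MetricSpace X] {S : Set X} (hS : IsPreconnected S)
    {f : X → ℂ} (hf : ContinuousOn f S) (hint : ∀ t ∈ S, ∃ n : ℤ, f t = n)
    {a b : X} (ha : a ∈ S) (hb : b ∈ S) : f a = f b := by
  refine const_of_locconst hS (fun x hx => ?_) ha hb
  have := (Metric.continuousWithinAt_iff.mp (hf x hx)) (1/2) (by norm_num)
  obtain ⟨δ, hδ, h⟩ := this
  refine ⟨δ, hδ, fun y hy hd => ?_⟩
  obtain ⟨n, hn⟩ := hint y hy
  obtain ⟨m, hm⟩ := hint x hx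
  have hdist : dist (f y) (f x) < 1/2 := h hy hd
  rw [hn, hm] at hdist ⊢
  have : ((n - m : ℤ) : ℂ) = (n : ℂ) - m := by push_cast; ring
  by_contra hne
  have hne' : n ≠ m := fun h' => hne (by rw [h'])
  have h1 : (1 : ℝ) ≤ |(n - m : ℤ)| := by
    exact_mod_cast Int.one_le_abs (by omega)
  have : dist ((n:ℂ)) ((m:ℂ)) = |((n - m : ℤ) : ℝ)| := by
    rw [Complex.dist_eq]
    have : ((n:ℂ)) - m = (((n - m : ℤ) : ℝ) : ℂ) := by push_cast; ring
    rw [this, Complex.norm_real, Real.norm_eq_abs]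
  rw [this] at hdist
  have : ((1:ℝ)) ≤ |((n - m : ℤ) : ℝ)| := by exact_mod_cast h1
  linarith

lemma lift_exists {φ : ℝ → ℂ} (hc : ContinuousOn φ (Icc 0 1))
    (hnz : ∀ t ∈ Icc (0:ℝ) 1, φ t ≠ 0) :
    ∃ ψ : ℝ → ℂ, ContinuousOn ψ (Icc 0 1) ∧ ∀ t ∈ Icc (0:ℝ) 1, Complex.exp (ψ t) = φ t := by
  have h01 : (0:ℝ) ∈ Icc (0:ℝ) 1 := ⟨le_refl _, by norm_num⟩
  -- minimum of the norm
  obtain ⟨t₀, ht₀K, ht₀min⟩ := isCompact_Icc.exists_isMinOn ⟨0, h01⟩ hc.norm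
  set m₀ : ℝ := ‖φ t₀‖ with hm₀def
  have hm₀ : 0 < m₀ := norm_pos_iff.mpr (hnz t₀ ht₀K)
  have hmin : ∀ t ∈ Icc (0:ℝ) 1, m₀ ≤ ‖φ t‖ := fun t ht => ht₀min ht
  -- uniform continuity
  have huc := isCompact_Icc.uniformContinuousOn_of_continuous hc
  rw [Metric.uniformContinuousOn_iff] at huc
  obtain ⟨δ, hδ, hUC⟩ := huc m₀ hm₀
  obtain ⟨n, hn⟩ := exists_nat_one_div_lt hδ
  set N : ℕ := n + 1 with hNdef
  have hN0 : (N:ℝ) ≠ 0 := by positivity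
  have hNd : (1:ℝ) / N < δ := by exact_mod_cast hn
  set q : ℕ → ℝ → ℂ := fun j t => φ (min t ((j:ℝ) / N)) with hqdef
  -- membership
  have hmem : ∀ t ∈ Icc (0:ℝ) 1, ∀ j : ℕ, min t ((j:ℝ)/N) ∈ Icc (0:ℝ) 1 := by
    intro t ht j
    exact ⟨le_min ht.1 (by positivity), min_le_of_left_le ht.2⟩
  -- distance of consecutive min-points
  have hminle : ∀ (x b b' : ℝ), b ≤ b' → |min x b' - min x b| ≤ b' - b := by
    intro x b b' hbb
    rcases le_total x b with h | h
    · simp only [min_eq_left h, min_eq_left (h.trans hbb), sub_self, abs_zero]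
      linarith
    · rcases le_total x b' with h' | h'
      · rw [min_eq_left h', min_eq_right h, _root_.abs_of_nonneg (by linarith)]; linarith
      · rw [min_eq_right h', min_eq_right h, _root_.abs_of_nonneg (by linarith)]
  have hqnz : ∀ t ∈ Icc (0:ℝ) 1, ∀ j : ℕ, q j t ≠ 0 := fun t ht j =>
    hnz _ (hmem t ht j)
  have hqm : ∀ t ∈ Icc (0:ℝ) 1, ∀ j : ℕ, m₀ ≤ ‖q j t‖ := fun t ht j =>
    hmin _ (hmem t ht j)
  have hclose : ∀ t ∈ Icc (0:ℝ) 1, ∀ j : ℕ, ‖q (j+1) t - q j t‖ < m₀ := by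
    intro t ht j
    have hd : dist (min t (((j:ℕ)+1:ℝ)/N)) (min t ((j:ℝ)/N)) < δ := by
      rw [Real.dist_eq]
      have hle : ((j:ℝ))/N ≤ ((j:ℝ)+1)/N :=
        (div_le_div_iff_of_pos_right (by positivity)).mpr (by linarith)
      calc |min t (((j:ℝ)+1)/N) - min t ((j:ℝ)/N)| ≤ ((j:ℝ)+1)/N - (j:ℝ)/N :=
            hminle t _ _ hle
        _ = 1/N := by field_simp; ring
        _ < δ := hNd
    have := hUC _ (hmem t ht (j+1)) _ (hmem t ht j) (by push_cast at hd ⊢; exact hd)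
    rw [dist_eq_norm] at this
    simpa [hqdef] using this
  have hratio : ∀ t ∈ Icc (0:ℝ) 1, ∀ j : ℕ, ‖q (j+1) t / q j t - 1‖ < 1 := by
    intro t ht j
    have hb := hqnz t ht j
    have : q (j+1) t / q j t - 1 = (q (j+1) t - q j t) / q j t := by field_simp
    rw [this, norm_div]
    rw [div_lt_one (norm_pos_iff.mpr hb)]
    exact lt_of_lt_of_le (hclose t ht j) (hqm t ht j)
  have hrationz : ∀ t ∈ Icc (0:ℝ) 1, ∀ j : ℕ, q (j+1) t / q j t ≠ 0 := by
    intro t ht j h0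
    have := hratio t ht j
    rw [h0] at this
    simp at this
  have hslit : ∀ t ∈ Icc (0:ℝ) 1, ∀ j : ℕ, q (j+1) t / q j t ∈ slitPlane := by
    intro t ht j
    have : q (j+1) t / q j t = 1 + (q (j+1) t / q j t - 1) := by ring
    rw [this]
    exact mem_slitPlane_of_norm_lt_one (hratio t ht j)
  refine ⟨fun t => Complex.log (φ 0) +
      ∑ j ∈ Finset.range N, Complex.log (q (j+1) t / q j t), ?_, ?_⟩
  · apply ContinuousOn.add continuousOn_const
    apply continuousOn_finset_sum
    intro j _
    have hqcont : ∀ i : ℕ, ContinuousOn (q i) (Icc 0 1) := by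
      intro i
      apply hc.comp ((continuous_id.min continuous_const).continuousOn)
      intro t ht
      exact hmem t ht i
    exact ((hqcont (j+1)).div (hqcont j) (fun t ht => hqnz t ht j)).clog
      (fun t ht => hslit t ht j)
  · intro t ht
    rw [Complex.exp_add, Complex.exp_sum, Complex.exp_log (hnz 0 h01)]
    have hprod : ∀ k : ℕ, (∏ j ∈ Finset.range k, Complex.exp (Complex.log (q (j+1) t / q j t)))
        = q k t / q 0 t := by
      intro k
      induction k with
      | zero => simp [hqnz t ht 0]
      | succ k ih =>
        rw [Finset.prod_range_succ, ih, Complex.exp_log (hrationz t ht k),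
          div_mul_div_comm, mul_comm (q 0 t) (q k t),
          mul_div_mul_left _ _ (hqnz t ht k)]
    rw [hprod N]
    have hqN : q N t = φ t := by
      simp only [hqdef]
      rw [div_self hN0, min_eq_left ht.2]
    have hq0 : q 0 t = φ 0 := by
      simp only [hqdef]
      norm_num
      rw [min_eq_right ht.1]
    rw [hqN, hq0, mul_comm]
    exact div_mul_cancel₀ _ (hnz 0 h01)

open Classical in
/-- The winding increment of `φ` along `[0,1]`, via a choice of logarithm lift. -/
noncomputable def wdiff (φ : ℝ → ℂ) : ℂ :=
  if h : ∃ ψ : ℝ → ℂ, ContinuousOn ψ (Icc 0 1) ∧ ∀ t ∈ Icc (0:ℝ) 1, Complex.exp (ψ t) = φ t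
  then h.choose 1 - h.choose 0 else 0

lemma lift_unique {φ ψ₁ ψ₂ : ℝ → ℂ}
    (h₁c : ContinuousOn ψ₁ (Icc 0 1)) (h₁ : ∀ t ∈ Icc (0:ℝ) 1, Complex.exp (ψ₁ t) = φ t)
    (h₂c : ContinuousOn ψ₂ (Icc 0 1)) (h₂ : ∀ t ∈ Icc (0:ℝ) 1, Complex.exp (ψ₂ t) = φ t) :
    ψ₁ 1 - ψ₁ 0 = ψ₂ 1 - ψ₂ 0 := by
  have key : ∀ t ∈ Icc (0:ℝ) 1, ∃ n : ℤ,
      ψ₁ t - ψ₂ t = (n : ℂ) * (2 * Real.pi * Complex.I) := by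
    intro t ht
    have : Complex.exp (ψ₁ t - ψ₂ t) = 1 := by
      rw [Complex.exp_sub, h₁ t ht, h₂ t ht, div_self]
      rw [← h₂ t ht]; exact Complex.exp_ne_zero _
    exact Complex.exp_eq_one_iff.mp this
  have key' : ∀ t ∈ Icc (0:ℝ) 1, ∃ n : ℤ,
      (fun s => (ψ₁ s - ψ₂ s) / (2 * Real.pi * Complex.I)) t = (n : ℂ) := by
    intro t ht
    obtain ⟨n, hn⟩ := key t ht
    refine ⟨n, ?_⟩
    show (ψ₁ t - ψ₂ t) / (2 * Real.pi * Complex.I) = (n : ℂ)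
    rw [hn, mul_div_assoc, div_self, mul_one]
    simp [Real.pi_ne_zero, Complex.I_ne_zero]
  have hcont : ContinuousOn (fun s => (ψ₁ s - ψ₂ s) / (2 * Real.pi * Complex.I)) (Icc 0 1) :=
    (h₁c.sub h₂c).div_const _
  have := const_of_intvalued isPreconnected_Icc hcont key'
    (a := 0) (b := 1) ⟨le_refl _, by norm_num⟩ ⟨by norm_num, le_refl _⟩
  field_simp [Real.pi_ne_zero, Complex.I_ne_zero] at this
  linear_combination -this

lemma wdiff_eq_lift {φ ψ : ℝ → ℂ}
    (hc : ContinuousOn ψ (Icc 0 1)) (h : ∀ t ∈ Icc (0:ℝ) 1, Complex.exp (ψ t) = φ t) :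
    wdiff φ = ψ 1 - ψ 0 := by
  have hex : ∃ ψ' : ℝ → ℂ, ContinuousOn ψ' (Icc 0 1) ∧
      ∀ t ∈ Icc (0:ℝ) 1, Complex.exp (ψ' t) = φ t := ⟨ψ, hc, h⟩
  rw [wdiff, dif_pos hex]
  exact lift_unique hex.choose_spec.1 hex.choose_spec.2 hc h

lemma wdiff_eq_zero_far {φ : ℝ → ℂ} (hc : ContinuousOn φ (Icc 0 1))
    (hloop : φ 1 = φ 0) {z₀ : ℂ} (hz₀ : z₀ ≠ 0)
    (hball : ∀ t ∈ Icc (0:ℝ) 1, ‖φ t - z₀‖ < ‖z₀‖) : wdiff φ = 0 := by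
  have hsl : ∀ t ∈ Icc (0:ℝ) 1, φ t / z₀ ∈ slitPlane := by
    intro t ht
    have : φ t / z₀ = 1 + (φ t - z₀) / z₀ := by field_simp; ring
    rw [this]
    apply mem_slitPlane_of_norm_lt_one
    rw [norm_div, div_lt_one (norm_pos_iff.mpr hz₀)]
    exact hball t ht
  have hnz : ∀ t ∈ Icc (0:ℝ) 1, φ t / z₀ ≠ 0 := fun t ht =>
    slitPlane_ne_zero (hsl t ht)
  set ψ : ℝ → ℂ := fun t => Complex.log (φ t / z₀) + Complex.log z₀ with hψ
  have hψc : ContinuousOn ψ (Icc 0 1) :=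
    (((hc.div_const _)).clog hsl).add continuousOn_const
  have hψl : ∀ t ∈ Icc (0:ℝ) 1, Complex.exp (ψ t) = φ t := by
    intro t ht
    rw [hψ]
    simp only
    rw [Complex.exp_add, Complex.exp_log (hnz t ht), Complex.exp_log hz₀]
    field_simp
  rw [wdiff_eq_lift hψc hψl, hψ]
  simp [hloop]

lemma wdiff_leash {φ₁ φ₂ : ℝ → ℂ} (h₁c : ContinuousOn φ₁ (Icc 0 1))
    (h₂c : ContinuousOn φ₂ (Icc 0 1)) (h₁loop : φ₁ 1 = φ₁ 0) (h₂loop : φ₂ 1 = φ₂ 0)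
    (hleash : ∀ t ∈ Icc (0:ℝ) 1, ‖φ₂ t - φ₁ t‖ < ‖φ₁ t‖) :
    wdiff φ₂ = wdiff φ₁ := by
  have h₁nz : ∀ t ∈ Icc (0:ℝ) 1, φ₁ t ≠ 0 := by
    intro t ht h0
    have := hleash t ht
    rw [h0] at this
    simp at this
    exact absurd this (by simp [norm_nonneg])
  have hsl : ∀ t ∈ Icc (0:ℝ) 1, φ₂ t / φ₁ t ∈ slitPlane := by
    intro t ht
    have : φ₂ t / φ₁ t = 1 + (φ₂ t - φ₁ t) / φ₁ t := by field_simp [h₁nz t ht]; ring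
    rw [this]
    apply mem_slitPlane_of_norm_lt_one
    rw [norm_div, div_lt_one (norm_pos_iff.mpr (h₁nz t ht))]
    exact hleash t ht
  obtain ⟨ψ₁, hψ₁c, hψ₁⟩ := lift_exists h₁c h₁nz
  set ψ₂ : ℝ → ℂ := fun t => ψ₁ t + Complex.log (φ₂ t / φ₁ t) with hψ₂def
  have hψ₂c : ContinuousOn ψ₂ (Icc 0 1) :=
    hψ₁c.add ((h₂c.div h₁c h₁nz).clog hsl)
  have hψ₂ : ∀ t ∈ Icc (0:ℝ) 1, Complex.exp (ψ₂ t) = φ₂ t := by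
    intro t ht
    rw [hψ₂def]
    simp only
    rw [Complex.exp_add, hψ₁ t ht, Complex.exp_log (slitPlane_ne_zero (hsl t ht))]
    field_simp [h₁nz t ht]
  rw [wdiff_eq_lift hψ₂c hψ₂, wdiff_eq_lift hψ₁c hψ₁, hψ₂def]
  simp only
  rw [h₁loop, h₂loop]
  ring

lemma wdiff_ne_zero_antiperiodic {φ : ℝ → ℂ} (hc : ContinuousOn φ (Icc 0 1))
    (hnz : ∀ t ∈ Icc (0:ℝ) 1, φ t ≠ 0)
    (hanti : ∀ t ∈ Icc (0:ℝ) (1/2), φ (t + 1/2) = -φ t) : wdiff φ ≠ 0 := by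
  obtain ⟨ψ, hψc, hψ⟩ := lift_exists hc hnz
  have hmem : ∀ t ∈ Icc (0:ℝ) (1/2), t ∈ Icc (0:ℝ) 1 := by
    intro t ht; exact ⟨ht.1, by linarith [ht.2]⟩
  have hmem' : ∀ t ∈ Icc (0:ℝ) (1/2), t + 1/2 ∈ Icc (0:ℝ) 1 := by
    intro t ht; exact ⟨by linarith [ht.1], by linarith [ht.2]⟩
  set u : ℝ → ℂ := fun t => ψ (t + 1/2) - ψ t with hu
  have huexp : ∀ t ∈ Icc (0:ℝ) (1/2), Complex.exp (u t) = -1 := by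
    intro t ht
    rw [hu]
    simp only
    rw [Complex.exp_sub, hψ _ (hmem' t ht), hψ _ (hmem t ht), hanti t ht,
      neg_div, div_self (hnz t (hmem t ht))]
  have hu0 : (0:ℝ) ∈ Icc (0:ℝ) (1/2) := ⟨le_refl _, by norm_num⟩
  have hu12 : (1/2:ℝ) ∈ Icc (0:ℝ) (1/2) := ⟨by norm_num, le_refl _⟩
  -- u is constant on [0,1/2]
  have hconst : u (1/2) = u 0 := by
    have key' : ∀ t ∈ Icc (0:ℝ) (1/2), ∃ n : ℤ,
        (fun s => (u s - u 0) / (2 * Real.pi * Complex.I)) t = (n : ℂ) := by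
      intro t ht
      have : Complex.exp (u t - u 0) = 1 := by
        rw [Complex.exp_sub, huexp t ht, huexp 0 hu0, div_self (by norm_num)]
      obtain ⟨n, hn⟩ := Complex.exp_eq_one_iff.mp this
      refine ⟨n, ?_⟩
      show (u t - u 0) / (2 * Real.pi * Complex.I) = (n : ℂ)
      rw [hn, mul_div_assoc, div_self, mul_one]
      simp [Real.pi_ne_zero, Complex.I_ne_zero]
    have hucont : ContinuousOn u (Icc 0 (1/2)) := by
      rw [hu]
      apply ContinuousOn.sub
      · apply hψc.comp (by fun_prop)
        intro t ht; exact hmem' t ht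
      · exact hψc.mono (fun t ht => hmem t ht)
    have := const_of_intvalued isPreconnected_Icc
      ((hucont.sub continuousOn_const).div_const _) key' hu12 hu0
    simp only [Pi.sub_apply] at this; rw [div_left_inj' (by simp [Real.pi_ne_zero, Complex.I_ne_zero])] at this
    linear_combination this
  have hw : wdiff φ = 2 * u 0 := by
    rw [wdiff_eq_lift hψc hψ]
    have h1 : ψ 1 - ψ 0 = u (1/2) + u 0 := by
      rw [hu]
      simp only
      norm_num
    rw [h1, hconst]
    ring
  rw [hw]
  intro h0
  have hu0' : u 0 = 0 := by
    rcases mul_eq_zero.mp h0 with h | h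
    · norm_num at h
    · exact h
  have he := huexp 0 hu0
  rw [hu0'] at he
  simp only [Complex.exp_zero] at he
  norm_num at he

lemma ball_infinite (a : ℂ) {d : ℝ} (hd : 0 < d) : (Metric.ball a d).Infinite := by
  refine Set.infinite_of_injective_forall_mem
    (f := fun n : ℕ => a + ((d / (n + 2) : ℝ) : ℂ)) ?_ ?_
  · intro m n hmn
    have h1 : ((d / (m + 2) : ℝ) : ℂ) = ((d / (n + 2) : ℝ) : ℂ) :=
      add_right_injective a hmn
    have h2 : (d / ((m:ℝ) + 2)) = d / ((n:ℝ) + 2) := by exact_mod_cast h1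
    have hm2 : (0:ℝ) < (m:ℝ) + 2 := by positivity
    have hn2 : (0:ℝ) < (n:ℝ) + 2 := by positivity
    rw [div_eq_div_iff (ne_of_gt hm2) (ne_of_gt hn2)] at h2
    have : ((m:ℝ)) + 2 = (n:ℝ) + 2 := mul_left_cancel₀ (ne_of_gt hd) (by linarith)
    exact_mod_cast (by linarith : (m:ℝ) = n)
  · intro n
    rw [Metric.mem_ball, dist_eq_norm]
    have hn2 : (0:ℝ) < n + 2 := by positivity
    have : ‖a + ((d / (n + 2) : ℝ) : ℂ) - a‖ = |d / (n + 2)| := by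
      rw [show a + ((d / (n + 2) : ℝ) : ℂ) - a = ((d / (n + 2) : ℝ) : ℂ) by ring]
      rw [Complex.norm_real, Real.norm_eq_abs]
    rw [this, _root_.abs_of_nonneg (by positivity)]
    rw [div_lt_iff₀ hn2]
    nlinarith

lemma exists_gt_near {p : Polynomial ℂ} (hdeg : 0 < p.degree) {r : ℝ} {a : ℂ}
    (ha : r ≤ ‖p.eval a‖) {d : ℝ} (hd : 0 < d) :
    ∃ a', dist a' a < d ∧ r < ‖p.eval a'‖ := by
  by_contra hcon
  push_neg at hcon
  have hmax : IsMaxOn (norm ∘ fun z => p.eval z) (Metric.ball a d) a := by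
    intro z hz
    simp only [Function.comp_apply, Set.mem_setOf_eq]
    calc ‖p.eval z‖ ≤ r := hcon z (by rwa [Metric.mem_ball] at hz)
      _ ≤ ‖p.eval a‖ := ha
  have heq := Complex.eqOn_of_isPreconnected_of_isMaxOn_norm
    (convex_ball a d).isPreconnected Metric.isOpen_ball
    (p.differentiable.differentiableOn) (Metric.mem_ball_self hd) hmax
  have hroots : (Metric.ball a d) ⊆ {x | (p - Polynomial.C (p.eval a)).IsRoot x} := by
    intro z hz
    have := heq hz
    simp only [Function.const_apply] at this
    simp [Polynomial.IsRoot, this]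
  have hzero := Polynomial.eq_zero_of_infinite_isRoot (p - Polynomial.C (p.eval a))
    ((ball_infinite a hd).mono hroots)
  have hp : p = Polynomial.C (p.eval a) := by
    have := sub_eq_zero.mp hzero; exact this
  rw [hp] at hdeg
  exact absurd (lt_of_lt_of_le hdeg Polynomial.degree_C_le) (by simp)

lemma bounded_sublevel {p : Polynomial ℂ} (hdeg : 0 < p.degree) (r : ℝ) :
    IsBounded {z : ℂ | ‖p.eval z‖ ≤ r} := by
  have htend : Tendsto (fun x : ℂ => ‖p.eval x‖) (cobounded ℂ) atTop :=
    Polynomial.tendsto_norm_atTop p hdeg tendsto_norm_cobounded_atTop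
  have hev : ∀ᶠ x in cobounded ℂ, r < ‖p.eval x‖ := htend.eventually_gt_atTop r
  rw [Bornology.isBounded_def]
  have : {z : ℂ | ‖p.eval z‖ ≤ r}ᶜ = {z : ℂ | r < ‖p.eval z‖} := by
    ext z; simp [not_le]
  rw [this]
  exact hev

lemma unbounded_component {p : Polynomial ℂ} (hdeg : 0 < p.degree) {r : ℝ} {W : Set ℂ}
    (hWo : IsOpen W) (hWsub : W ⊆ {z : ℂ | ‖p.eval z‖ < r}) {a' : ℂ}
    (ha' : r < ‖p.eval a'‖) : ¬ IsBounded (connectedComponentIn Wᶜ a') := by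
  intro hbdd
  have ha'W : a' ∈ Wᶜ := by
    intro h
    have := hWsub h
    simp only [Set.mem_setOf_eq] at this
    linarith
  set C' : Set ℂ := connectedComponentIn Wᶜ a' with hC'
  have hC'sub : C' ⊆ Wᶜ := connectedComponentIn_subset _ _
  have hC'closed : IsClosed C' := by
    have h1 : closure C' ⊆ Wᶜ := closure_minimal hC'sub (isClosed_compl_iff.mpr hWo)
    have h2 : closure C' ⊆ C' := by
      apply IsPreconnected.subset_connectedComponentIn
        isPreconnected_connectedComponentIn.closure
        (subset_closure (mem_connectedComponentIn ha'W)) h1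
    exact isClosed_of_closure_subset h2
  set U : Set ℂ := interior (W ∪ C') with hU
  have hWU : W ⊆ U := interior_maximal subset_union_left hWo
  have hC'int : C' \ closure W ⊆ U := by
    rintro z ⟨hzC, hzW⟩
    rw [Metric.mem_closure_iff] at hzW
    push_neg at hzW
    obtain ⟨ε, hε, hball⟩ := hzW
    have hballW : Metric.ball z ε ⊆ Wᶜ := by
      intro y hy hyW
      exact absurd (Metric.mem_ball'.mp hy) (not_lt.mpr (hball y hyW))
    have hballC : Metric.ball z ε ⊆ C' := by
      have := (convex_ball z ε).isPreconnected.subset_connectedComponentIn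
        (Metric.mem_ball_self hε) hballW
      rwa [← connectedComponentIn_eq hzC] at this
    exact mem_interior.mpr ⟨Metric.ball z ε, hballC.trans subset_union_right,
      Metric.isOpen_ball, Metric.mem_ball_self hε⟩
  have hC'clU : C' ⊆ closure U := by
    intro z hz
    by_cases hzW : z ∈ closure W
    · exact closure_mono hWU hzW
    · exact subset_closure (hC'int ⟨hz, hzW⟩)
  have hfront : frontier U ⊆ closure W := by
    intro x hx
    have hxcl : x ∈ closure (W ∪ C') := closure_mono interior_subset hx.1
    rw [closure_union, hC'closed.closure_eq] at hxcl
    rcases hxcl with h | h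
    · exact h
    · by_cases hxW : x ∈ closure W
      · exact hxW
      · exact absurd (hC'int ⟨h, hxW⟩) (by
          have := hx.2
          rwa [hU, interior_interior] at this)
  have hUbdd : IsBounded U := by
    apply IsBounded.subset _ interior_subset
    apply IsBounded.union
    · exact (bounded_sublevel hdeg r).subset
        (fun z hz => show ‖p.eval z‖ ≤ r from le_of_lt (hWsub hz))
    · exact hbdd
  have hclosedset : IsClosed {z : ℂ | ‖p.eval z‖ ≤ r} :=
    IsClosed.preimage (p.continuous.norm) isClosed_Iic
  have hbound : ∀ x ∈ frontier U, ‖p.eval x‖ ≤ r := by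
    intro x hx
    exact closure_minimal (fun z hz => show ‖p.eval z‖ ≤ r from le_of_lt (hWsub hz))
      hclosedset (hfront hx)
  have hfin := Complex.norm_le_of_forall_mem_frontier_norm_le hUbdd
    (p.differentiable.diffContOnCl) hbound
    (hC'clU (mem_connectedComponentIn ha'W))
  linarith

lemma windzero {p : Polynomial ℂ} (hdeg : 0 < p.degree) {r : ℝ} {x₀ : ℂ}
    (hx₀ : ‖p.eval x₀‖ < r) {φ : ℝ → ℂ} (hφc : ContinuousOn φ (Icc 0 1))
    (hφW : ∀ t ∈ Icc (0:ℝ) 1,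
      φ t ∈ connectedComponentIn {z : ℂ | ‖p.eval z‖ < r} x₀)
    (hloop : φ 1 = φ 0) {a : ℂ} (ha : r ≤ ‖p.eval a‖) :
    wdiff (fun t => φ t - a) = 0 := by
  set Ω : Set ℂ := {z : ℂ | ‖p.eval z‖ < r} with hΩ
  have hΩo : IsOpen Ω := isOpen_lt (p.continuous.norm) continuous_const
  set W : Set ℂ := connectedComponentIn Ω x₀ with hW
  have hWsub : W ⊆ Ω := connectedComponentIn_subset _ _
  have hWo : IsOpen W := hΩo.connectedComponentIn
  -- the image of the loop
  set K : Set ℂ := φ '' (Icc 0 1) with hK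
  have hKcpt : IsCompact K := isCompact_Icc.image_of_continuousOn hφc
  have hKne : K.Nonempty := ⟨φ 0, 0, ⟨le_refl _, by norm_num⟩, rfl⟩
  have hKW : K ⊆ W := by rintro z ⟨t, ht, rfl⟩; exact hφW t ht
  -- points outside the sublevel set are not on the loop
  have hnotK : ∀ x : ℂ, r ≤ ‖p.eval x‖ → x ∉ K := by
    intro x hx hxK
    have := hWsub (hKW hxK)
    simp only [hΩ, Set.mem_setOf_eq] at this
    linarith
  have hdist : ∀ x : ℂ, r ≤ ‖p.eval x‖ → 0 < Metric.infDist x K := by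
    intro x hx
    exact (hKcpt.isClosed.notMem_iff_infDist_pos hKne).mp (hnotK x hx)
  have hdistle : ∀ (x : ℂ), ∀ t ∈ Icc (0:ℝ) 1, Metric.infDist x K ≤ ‖φ t - x‖ := by
    intro x t ht
    rw [show ‖φ t - x‖ = dist x (φ t) by rw [dist_comm, dist_eq_norm]]
    exact Metric.infDist_le_dist_of_mem ⟨t, ht, rfl⟩
  -- the winding number function
  set F : ℂ → ℂ := fun x => wdiff (fun t => φ t - x) with hF
  -- local constancy of F off K
  have hFloc : ∀ x y : ℂ, x ∉ K → dist y x < Metric.infDist x K → F y = F x := by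
    intro x y hx hxy
    apply wdiff_leash ((hφc.sub continuousOn_const)) ((hφc.sub continuousOn_const))
      (by simp [hloop]) (by simp [hloop])
    intro t ht
    have h1 : ‖(φ t - y) - (φ t - x)‖ = dist y x := by
      rw [show (φ t - y) - (φ t - x) = -(y - x) by ring, norm_neg, dist_eq_norm]
    simp only [Pi.sub_apply]; rw [h1]
    exact lt_of_lt_of_le hxy (hdistle x t ht)
  -- find a point near `a` strictly outside the closed sublevel set
  obtain ⟨a', ha'd, ha'⟩ := exists_gt_near hdeg ha (hdist a ha)
  have hstep1 : F a = F a' := (hFloc a a' (hnotK a ha) ha'd).symm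
  -- the component of `a'` in the complement of W is unbounded
  have hC'unb := unbounded_component hdeg hWo hWsub ha'
  set C' : Set ℂ := connectedComponentIn Wᶜ a' with hC'
  have ha'C' : a' ∈ C' := mem_connectedComponentIn (by
    intro h
    have := hWsub h
    simp only [hΩ, Set.mem_setOf_eq] at this
    linarith)
  -- a bound for the loop
  obtain ⟨M, hM⟩ := (hKcpt.isBounded).exists_norm_le
  obtain ⟨b, hbC', hbM⟩ : ∃ b ∈ C', M < ‖b‖ := by
    by_contra hcon
    push_neg at hcon
    exact hC'unb (isBounded_iff_forall_norm_le.mpr ⟨M, hcon⟩)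
  -- F vanishes at b
  have hFb : F b = 0 := by
    apply wdiff_eq_zero_far ((hφc.sub continuousOn_const)) (by simp [hloop])
      (z₀ := -b)
    · intro h
      have : b = 0 := by linear_combination -h
      rw [this] at hbM
      simp at hbM
      have := hM (φ 0) ⟨0, ⟨le_refl _, by norm_num⟩, rfl⟩
      have := norm_nonneg (φ 0)
      linarith
    · intro t ht
      have : φ t - b - -b = φ t := by ring
      simp only [Pi.sub_apply]; rw [this, norm_neg]
      calc ‖φ t‖ ≤ M := hM (φ t) ⟨t, ht, rfl⟩
        _ < ‖b‖ := hbM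
  -- F is constant along C'
  have hC'K : ∀ x ∈ C', x ∉ K := by
    intro x hx hxK
    exact absurd (hKW hxK) ((connectedComponentIn_subset _ _) hx)
  have hconst : F a' = F b := by
    apply const_of_locconst isPreconnected_connectedComponentIn
      (f := F) (S := C') ?_ ha'C' hbC'
    intro x hx
    refine ⟨Metric.infDist x K, ?_, fun y _ hd => hFloc x y (hC'K x hx) hd⟩
    exact (hKcpt.isClosed.notMem_iff_infDist_pos hKne).mp (hC'K x hx)
  rw [show (fun t => φ t - a) = fun t => φ t - a from rfl]
  calc wdiff (fun t => φ t - a) = F a := rfl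
    _ = 0 := by rw [hstep1, hconst, hFb]

lemma inj_on_comp (c' : ℕ → ℂ) (m : ℕ) {r : ℝ} {x₀ : ℂ}
    (hx₀ : fiter c' (m+1) x₀ ∈ Metric.ball (0:ℂ) r)
    (h0 : r ≤ ‖fiter c' (m+1) 0‖) :
    Set.InjOn (fun z => z^2 + c' 0)
      (connectedComponentIn ((fun z => fiter c' (m+1) z) ⁻¹' Metric.ball (0:ℂ) r) x₀) := by
  set p : Polynomial ℂ := fpoly c' (m+1) with hp
  have hsetEq : ((fun z => fiter c' (m+1) z) ⁻¹' Metric.ball (0:ℂ) r)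
      = {z : ℂ | ‖p.eval z‖ < r} := by
    ext z
    simp [Metric.mem_ball, dist_zero_right, fpoly_eval, hp]
  rw [hsetEq]
  set Ω : Set ℂ := {z : ℂ | ‖p.eval z‖ < r} with hΩ
  have hΩo : IsOpen Ω := isOpen_lt (p.continuous.norm) continuous_const
  have hx₀Ω : x₀ ∈ Ω := by
    simp only [hΩ, Set.mem_setOf_eq, fpoly_eval, hp]
    rwa [Metric.mem_ball, dist_zero_right] at hx₀
  set W : Set ℂ := connectedComponentIn Ω x₀ with hW
  have hWo : IsOpen W := hΩo.connectedComponentIn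
  have hWsub : W ⊆ Ω := connectedComponentIn_subset _ _
  have h0Ω : (0:ℂ) ∉ Ω := by
    simp only [hΩ, Set.mem_setOf_eq, fpoly_eval, hp]
    exact not_lt.mpr h0
  intro y₁ hy₁ y₂ hy₂ heq
  simp only at heq
  have hsq : y₁^2 = y₂^2 := by linear_combination heq
  have hcases : y₁ = y₂ ∨ y₁ = -y₂ := by
    have : (y₁ - y₂) * (y₁ + y₂) = 0 := by linear_combination hsq
    rcases mul_eq_zero.mp this with h | h
    · left; linear_combination h
    · right; linear_combination h
  rcases hcases with h | h
  · exact h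
  exfalso
  subst h
  -- so y₂ and -y₂ both lie in W
  set y : ℂ := y₂ with hy
  have hyW : y ∈ W := hy₂
  have hnyW : -y ∈ W := hy₁
  have hy0 : y ≠ 0 := by
    intro h0'
    rw [h0'] at hnyW
    exact h0Ω (hWsub (by simpa using hnyW))
  -- W is symmetric
  have hΩsymm : ∀ z ∈ Ω, -z ∈ Ω := by
    intro z hz
    simp only [hΩ, Set.mem_setOf_eq, fpoly_eval, hp] at hz ⊢
    rwa [fiter_even]
  have hsymm : ∀ z ∈ W, -z ∈ W := by
    have him : (fun z : ℂ => -z) '' W ⊆ W := by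
      have hpre : IsPreconnected ((fun z : ℂ => -z) '' W) :=
        isPreconnected_connectedComponentIn.image _ (continuous_neg.continuousOn)
      have hsub : (fun z : ℂ => -z) '' W ⊆ Ω := by
        rintro _ ⟨z, hz, rfl⟩
        exact hΩsymm z (hWsub hz)
      have hmem : -(-y) ∈ (fun z : ℂ => -z) '' W := ⟨-y, hnyW, rfl⟩
      have := hpre.subset_connectedComponentIn (x := -(-y)) hmem hsub
      rw [neg_neg] at this
      rwa [← connectedComponentIn_eq hyW] at this
    intro z hz
    exact him ⟨z, hz, rfl⟩
  -- a path from y to -y inside W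
  have hWconn : IsConnected W := ⟨⟨x₀, mem_connectedComponentIn hx₀Ω⟩,
    isPreconnected_connectedComponentIn⟩
  have hWpath : IsPathConnected W := (hWo.isConnected_iff_isPathConnected).mp hWconn
  obtain ⟨γ, hγ⟩ := hWpath.joinedIn y hyW (-y) hnyW
  set γ₀ : ℝ → ℂ := fun s => γ (Set.projIcc 0 1 zero_le_one s) with hγ₀
  have hγ₀c : Continuous γ₀ := γ.continuous.comp continuous_projIcc
  have hγ₀W : ∀ s : ℝ, γ₀ s ∈ W := fun s => hγ _
  have hγ₀0 : γ₀ 0 = y := by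
    rw [hγ₀]
    simp only [Set.projIcc_left]
    exact γ.source
  have hγ₀1 : γ₀ 1 = -y := by
    rw [hγ₀]
    simp only [Set.projIcc_right]
    exact γ.target
  set φ : ℝ → ℂ := fun t => if t ≤ 1/2 then γ₀ (2*t) else -γ₀ (2*t - 1) with hφ
  have hφdef : ∀ t : ℝ, φ t = if t ≤ 1/2 then γ₀ (2*t) else -γ₀ (2*t - 1) :=
    fun t => rfl
  have hφc : Continuous φ := by
    apply Continuous.if_le (by fun_prop) (by fun_prop) continuous_id continuous_const
    intro t ht
    simp only [id_eq] at ht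
    subst ht
    norm_num
    rw [hγ₀1, hγ₀0]
  have hφW : ∀ t : ℝ, φ t ∈ W := by
    intro t
    rw [hφdef t]
    by_cases h' : t ≤ 1/2
    · rw [if_pos h']; exact hγ₀W _
    · rw [if_neg h']; exact hsymm _ (hγ₀W _)
  have hφnz : ∀ t : ℝ, φ t ≠ 0 := by
    intro t h0'
    exact h0Ω (hWsub (h0' ▸ hφW t))
  have hφanti : ∀ t ∈ Icc (0:ℝ) (1/2), φ (t + 1/2) = -φ t := by
    intro t ht
    rcases eq_or_lt_of_le ht.1 with h0' | h0'
    · -- t = 0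
      rw [← h0', hφdef ((0:ℝ) + 1/2), hφdef 0]
      norm_num
      rw [hγ₀1, hγ₀0]
    · rw [hφdef (t + 1/2), hφdef t]
      rw [if_neg (by linarith), if_pos ht.2]
      congr 1
      ring_nf
  have hφloop : φ 1 = φ 0 := by
    rw [hφdef 1, hφdef 0]
    norm_num
    rw [hγ₀1, hγ₀0]
    ring
  have hzero : wdiff φ = 0 := by
    have := windzero (fpoly_degree_pos c' (m+1)) (r := r) (x₀ := x₀)
      (by simpa [fpoly_eval, Metric.mem_ball, dist_zero_right] using hx₀)
      (φ := φ) hφc.continuousOn (fun t _ => hφW t) hφloop (a := (0:ℂ))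
      (by simpa [fpoly_eval] using h0)
    simpa using this
  exact wdiff_ne_zero_antiperiodic hφc.continuousOn (fun t _ => hφnz t) hφanti hzero

lemma ncard_le_two_mul {A Z : Set ℂ} (hA : A.Finite) (hZ : Z.Finite) {g : ℂ → ℂ}
    (him : g '' A ⊆ Z)
    (hfib : ∀ z : ℂ, ∃ u v : ℂ, ∀ y : ℂ, g y = z → y = u ∨ y = v) :
    A.ncard ≤ 2 * Z.ncard := by
  classical
  have hcardA : A.ncard = hA.toFinset.card := Set.ncard_eq_toFinset_card A hA
  have hcardZ : Z.ncard = hZ.toFinset.card := Set.ncard_eq_toFinset_card Z hZ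
  rw [hcardA, hcardZ]
  have h1 : hA.toFinset.card ≤ 2 * (hA.toFinset.image g).card := by
    apply Finset.card_le_mul_card_image
    intro b _
    obtain ⟨u, v, huv⟩ := hfib b
    calc ({a ∈ hA.toFinset | g a = b} : Finset ℂ).card
        ≤ ({u, v} : Finset ℂ).card := by
          apply Finset.card_le_card
          intro y hy
          rw [Finset.mem_filter] at hy
          rcases huv y hy.2 with h | h
          · simp [h]
          · simp [h]
      _ ≤ 2 := Finset.card_insert_le _ _ |>.trans (by simp)
  refine h1.trans (Nat.mul_le_mul_left 2 ?_)
  apply Finset.card_le_card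
  intro z hz
  rw [Finset.mem_image] at hz
  obtain ⟨y, hy, rfl⟩ := hz
  rw [Set.Finite.mem_toFinset] at hy ⊢
  exact him ⟨y, hy, rfl⟩

lemma sq_fiber (b : ℂ) : ∀ z : ℂ, ∃ u v : ℂ, ∀ y : ℂ, y ^ 2 + b = z → y = u ∨ y = v := by
  intro z
  obtain ⟨u, hu⟩ := IsAlgClosed.exists_pow_nat_eq (k := ℂ) (z - b) zero_lt_two
  refine ⟨u, -u, fun y hy => ?_⟩
  have : (y - u) * (y + u) = 0 := by
    have : y ^ 2 = z - b := by linear_combination hy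
    linear_combination this - hu
  rcases mul_eq_zero.mp this with h | h
  · left; linear_combination h
  · right; linear_combination h

lemma main_count (R G r : ℝ) (c : ℕ → ℂ) (hc : ∀ n, ‖c n‖ < R)
    (hG : ∀ ν : ℕ → ℂ, (∀ n, ‖ν n‖ < R) →
      ∀ w ∈ Metric.ball (0 : ℂ) r, green ν w ≤ G) :
    ∀ m s x₀ w,
      x₀ ∈ (fun z => fiter (fun n => c (n + s)) m z) ⁻¹' Metric.ball (0:ℂ) r →
      w ∈ Metric.ball (0:ℂ) r →
      {y ∈ connectedComponentIn
          ((fun z => fiter (fun n => c (n + s)) m z) ⁻¹' Metric.ball (0:ℂ) r) x₀ |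
          fiter (fun n => c (n + s)) m y = w}.ncard
        ≤ 2 ^ ({i : ℕ | i < m ∧ green (fun n => c (n + i + s)) 0 ≤ G / 2 ^ (m - i)}.ncard) := by
  intro m
  induction m with
  | zero =>
    intro s x₀ w hx₀ hw
    have hsub : {y ∈ connectedComponentIn
        ((fun z => fiter (fun n => c (n + s)) 0 z) ⁻¹' Metric.ball (0:ℂ) r) x₀ |
        fiter (fun n => c (n + s)) 0 y = w} ⊆ {w} := by
      rintro y ⟨_, hy⟩
      exact hy
    calc _ ≤ ({w} : Set ℂ).ncard := Set.ncard_le_ncard hsub (Set.finite_singleton w)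
      _ = 1 := Set.ncard_singleton w
      _ ≤ _ := Nat.one_le_two_pow
  | succ m ih =>
    intro s x₀ w hx₀ hw
    set c' : ℕ → ℂ := fun n => c (n + s) with hc'
    set c'' : ℕ → ℂ := fun n => c (n + (s+1)) with hc''
    set g : ℂ → ℂ := fun z => z ^ 2 + c' 0 with hg
    have hcomp : ∀ z, fiter c' (m+1) z = fiter c'' m (g z) := by
      intro z
      rw [fiter_succ_left]
      have : (fun i => c' (i + 1)) = c'' := by
        funext i
        show c ((i + 1) + s) = c (i + (s + 1))
        congr 1
        omega
      rw [this]
    set Ω : Set ℂ := (fun z => fiter c' (m+1) z) ⁻¹' Metric.ball (0:ℂ) r with hΩ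
    set Ω' : Set ℂ := (fun z => fiter c'' m z) ⁻¹' Metric.ball (0:ℂ) r with hΩ'
    have hgx₀ : g x₀ ∈ Ω' := by
      show fiter c'' m (g x₀) ∈ Metric.ball (0:ℂ) r
      rw [← hcomp]
      exact hx₀
    set W : Set ℂ := connectedComponentIn Ω x₀ with hW
    set W' : Set ℂ := connectedComponentIn Ω' (g x₀) with hW'
    have hWtoW' : ∀ y ∈ W, g y ∈ W' := by
      have hsub : g '' W ⊆ Ω' := by
        rintro _ ⟨z, hz, rfl⟩
        have hzΩ : z ∈ Ω := connectedComponentIn_subset _ _ hz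
        show fiter c'' m (g z) ∈ Metric.ball (0:ℂ) r
        rw [← hcomp]
        exact hzΩ
      have hpre : IsPreconnected (g '' W) :=
        isPreconnected_connectedComponentIn.image _
          ((continuous_pow 2).add continuous_const).continuousOn
      have := hpre.subset_connectedComponentIn
        (x := g x₀) ⟨x₀, mem_connectedComponentIn hx₀, rfl⟩ hsub
      intro y hy
      exact this ⟨y, hy, rfl⟩
    set A : Set ℂ := {y ∈ W | fiter c' (m+1) y = w} with hA
    set Z : Set ℂ := {z ∈ W' | fiter c'' m z = w} with hZ
    have hAfin : A.Finite := (fiber_finite c' (m+1) w).subset (fun y hy => hy.2)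
    have hZfin : Z.Finite := (fiber_finite c'' m w).subset (fun z hz => hz.2)
    have him : g '' A ⊆ Z := by
      rintro _ ⟨y, ⟨hyW, hyw⟩, rfl⟩
      exact ⟨hWtoW' y hyW, by rw [← hcomp]; exact hyw⟩
    have hIH := ih (s+1) (g x₀) w hgx₀ hw
    -- the bad index sets
    set B1 : Set ℕ := {i : ℕ | i < m + 1 ∧
      green (fun n => c (n + i + s)) 0 ≤ G / 2 ^ (m + 1 - i)} with hB1
    set B0 : Set ℕ := {i : ℕ | i < m ∧
      green (fun n => c (n + i + (s+1))) 0 ≤ G / 2 ^ (m - i)} with hB0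
    have hB0fin : B0.Finite := (Set.finite_Iio m).subset (fun i hi => hi.1)
    have himg : (fun i => i + 1) '' B0 = B1 \ {0} := by
      ext j
      constructor
      · rintro ⟨i, ⟨hilt, hile⟩, rfl⟩
        refine ⟨⟨show i + 1 < m + 1 by omega, ?_⟩, by simp⟩
        show green (fun n => c (n + (i+1) + s)) 0 ≤ G / 2 ^ (m + 1 - (i+1))
        have h1 : (fun n => c (n + (i+1) + s)) = (fun n => c (n + i + (s+1))) := by
          funext n; congr 1; omega
        rw [h1, show m + 1 - (i+1) = m - i by omega]
        exact hile
      · rintro ⟨⟨hjlt, hjle⟩, hj0⟩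
        simp only [Set.mem_singleton_iff] at hj0
        obtain ⟨i, rfl⟩ : ∃ i, j = i + 1 := ⟨j - 1, by omega⟩
        refine ⟨i, ⟨by omega, ?_⟩, rfl⟩
        have h1 : (fun n => c (n + (i+1) + s)) = (fun n => c (n + i + (s+1))) := by
          funext n; congr 1; omega
        rw [← h1, show m - i = m + 1 - (i+1) by omega]
        exact hjle
    have hncard_img : ((fun i => i + 1) '' B0).ncard = B0.ncard :=
      Set.ncard_image_of_injective _ (fun a b h => by omega)
    by_cases hgreen : green (fun n => c (n + 0 + s)) 0 ≤ G / 2 ^ (m + 1 - 0)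
    · -- the bad case: 0 ∈ B1, fibers of g counted with multiplicity 2
      have h0B1 : (0:ℕ) ∈ B1 := ⟨Nat.succ_pos m, hgreen⟩
      have hB1eq : B1 = insert 0 ((fun i => i + 1) '' B0) := by
        rw [himg]
        ext j
        constructor
        · intro hj
          by_cases hj0 : j = 0
          · exact Or.inl hj0
          · exact Or.inr ⟨hj, hj0⟩
        · rintro (rfl | ⟨hj, _⟩)
          · exact h0B1
          · exact hj
      have h0notin : (0:ℕ) ∉ (fun i => i + 1) '' B0 := by
        rintro ⟨i, _, h⟩
        simp at h
      have hB1card : B1.ncard = B0.ncard + 1 := by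
        rw [hB1eq, Set.ncard_insert_of_notMem h0notin
          (hB0fin.image _), hncard_img]
      have hcount : A.ncard ≤ 2 * Z.ncard :=
        ncard_le_two_mul hAfin hZfin him (sq_fiber (c' 0))
      calc A.ncard ≤ 2 * Z.ncard := hcount
        _ ≤ 2 * 2 ^ B0.ncard := Nat.mul_le_mul_left 2 hIH
        _ = 2 ^ (B0.ncard + 1) := by ring
        _ = 2 ^ B1.ncard := by rw [hB1card]
    · -- the good case: the critical orbit escapes, g is injective on W
      have hout : r ≤ ‖fiter c' (m+1) 0‖ := by
        by_contra hcon
        push_neg at hcon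
        have hζ : fiter c' (m+1) 0 ∈ Metric.ball (0:ℂ) r := by
          rw [Metric.mem_ball, dist_zero_right]
          exact hcon
        have hshift := green_shift c' (m+1) 0
        have hν : ∀ n, ‖(fun i => c' (i + (m+1))) n‖ < R := fun n => hc _
        have hgle := hG (fun i => c' (i + (m+1))) hν _ hζ
        have hpos : (0:ℝ) < 1 / 2 ^ (m+1) := by positivity
        have : green c' 0 ≤ G / 2 ^ (m + 1) := by
          rw [hshift]
          rw [div_eq_mul_inv G, mul_comm G]
          have h2 : (1 / 2 ^ (m+1) : ℝ) = (2 ^ (m+1) : ℝ)⁻¹ := one_div _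
          rw [h2]
          exact mul_le_mul_of_nonneg_left hgle (by positivity)
        apply hgreen
        have hceq : (fun n => c (n + 0 + s)) = c' := by
          funext n
          show c (n + 0 + s) = c (n + s)
          congr 1
        rw [hceq, show m + 1 - 0 = m + 1 by omega]
        exact this
      have hinj : Set.InjOn g W := inj_on_comp c' m hx₀ hout
      have hAsub : A ⊆ W := fun y hy => hy.1
      have hcard : A.ncard = (g '' A).ncard :=
        (Set.ncard_image_of_injOn (hinj.mono hAsub)).symm
      have hB1eq : B1 = (fun i => i + 1) '' B0 := by
        rw [himg]
        ext j
        constructor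
        · intro hj
          refine ⟨hj, ?_⟩
          simp only [Set.mem_singleton_iff]
          rintro rfl
          exact hgreen hj.2
        · exact fun hj => hj.1
      calc A.ncard = (g '' A).ncard := hcard
        _ ≤ Z.ncard := Set.ncard_le_ncard him hZfin
        _ ≤ 2 ^ B0.ncard := hIH
        _ = 2 ^ B1.ncard := by rw [hB1eq, hncard_img]

theorem stmt11 (R Rt₀ G : ℝ) (hR : 0 < R)
    (c : ℕ → ℂ) (hc : ∀ n, ‖c n‖ < R)
    (hG : ∀ ν : ℕ → ℂ, (∀ n, ‖ν n‖ < R) →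
      ∀ w ∈ Metric.ball (0 : ℂ) Rt₀, green ν w ≤ G)
    (k l : ℕ)
    (hcount : Set.ncard {i : ℕ | i < k ∧ green (fun n => c (n + i)) 0 ≤ G / 2 ^ (k - i)} ≤ l) :
    ∀ U : Set ℂ,
      (∃ x ∈ (fun z => fiter c k z) ⁻¹' Metric.ball (0 : ℂ) Rt₀,
        U = connectedComponentIn ((fun z => fiter c k z) ⁻¹' Metric.ball (0 : ℂ) Rt₀) x) →
      ∀ w ∈ Metric.ball (0 : ℂ) Rt₀,
        Set.ncard {y ∈ U | fiter c k y = w} ≤ 2 ^ l := by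
  rintro U ⟨x, hx, rfl⟩ w hw
  have hc0 : (fun n => c (n + 0)) = c := by
    funext n
    rw [Nat.add_zero]
  have hx' : x ∈ (fun z => fiter (fun n => c (n + 0)) k z) ⁻¹' Metric.ball (0:ℂ) Rt₀ := by
    rw [hc0]; exact hx
  have hmc := main_count R G Rt₀ c hc hG k 0 x w hx' hw
  rw [hc0] at hmc
  have hBeq : {i : ℕ | i < k ∧ green (fun n => c (n + i + 0)) 0 ≤ G / 2 ^ (k - i)}
      = {i : ℕ | i < k ∧ green (fun n => c (n + i)) 0 ≤ G / 2 ^ (k - i)} := by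
    ext i
    have h1 : (fun n => c (n + i + 0)) = (fun n => c (n + i)) := by
      funext n; rw [Nat.add_zero]
    rw [Set.mem_setOf_eq, Set.mem_setOf_eq, h1]
  rw [hBeq] at hmc
  calc Set.ncard {y ∈ _ | fiter c k y = w} ≤ _ := hmc
    _ ≤ 2 ^ l := Nat.pow_le_pow_right (by norm_num) hcount
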